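/- The Bullough-Dodd two-particle scattering amplitude S(θ) satisfies the crossing symmetry condition S(θ) = S(iπ − θ) for all complex θ where both sides are defined. -/

import Mathlib

/-!
Since `sinh (iπ/2) = i` and `cosh (iπ/2) = 0`, reflection about `iπ/2` inverts `tanh` up to sign:
`tanh (iπ/2 - z) = -(tanh z)⁻¹`. Hence each ratio `tanh ((θ + c)/2) / tanh ((θ - c)/2)` is invariant
under `θ ↦ iπ - θ`, the two factors trading places, and `S` is a product of three such ratios.
-/

open Complex

/-- The Bullough-Dodd two-particle scattering amplitude, with `Q = b + 1/b`. -/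
noncomputable def BDS (b : ℝ) (θ : ℂ) : ℂ :=
  (Complex.tanh ((θ + 2 * Real.pi * I / 3) / 2) *
   Complex.tanh ((θ - 2 * Real.pi * I / (3 * (b : ℂ) * ((b : ℂ) + 1 / (b : ℂ)))) / 2) *
   Complex.tanh ((θ - 2 * Real.pi * I * (b : ℂ) / (3 * ((b : ℂ) + 1 / (b : ℂ)))) / 2)) /
  (Complex.tanh ((θ - 2 * Real.pi * I / 3) / 2) *
   Complex.tanh ((θ + 2 * Real.pi * I / (3 * ((b : ℂ) + 1 / (b : ℂ)) * (b : ℂ))) / 2) *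
   Complex.tanh ((θ + 2 * Real.pi * I * (b : ℂ) / (3 * ((b : ℂ) + 1 / (b : ℂ)))) / 2))

open Real

namespace Complex

/-- At the zeros and poles of `tanh` both sides are `0`, since `tanh = sinh / cosh` and `0⁻¹ = 0`. -/
theorem tanh_pi_mul_I_div_two_sub (z : ℂ) : tanh (π * I / 2 - z) = -(tanh z)⁻¹ := by
  have hsinh : sinh (π * I / 2) = I := by
    rw [mul_div_right_comm, ← ofReal_ofNat, ← ofReal_div, sinh_mul_I, ← ofReal_sin,
      Real.sin_pi_div_two, ofReal_one, one_mul]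
  have hcosh : cosh (π * I / 2) = 0 := by
    rw [mul_div_right_comm, ← ofReal_ofNat, ← ofReal_div, cosh_mul_I, ← ofReal_cos,
      Real.cos_pi_div_two, ofReal_zero]
  rw [tanh_eq_sinh_div_cosh, tanh_eq_sinh_div_cosh, sinh_sub, cosh_sub, hsinh, hcosh, inv_div,
    zero_mul, sub_zero, zero_mul, zero_sub, div_neg, mul_div_mul_left _ _ I_ne_zero]

end Complex

noncomputable def tanhRatio (c θ : ℂ) : ℂ := tanh ((θ + c) / 2) / tanh ((θ - c) / 2)

theorem tanhRatio_pi_mul_I_sub (c θ : ℂ) : tanhRatio c (π * I - θ) = tanhRatio c θ := by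
  have hplus : (π * I - θ + c) / 2 = π * I / 2 - (θ - c) / 2 := by ring
  have hminus : (π * I - θ - c) / 2 = π * I / 2 - (θ + c) / 2 := by ring
  rw [tanhRatio, tanhRatio, hplus, hminus, tanh_pi_mul_I_div_two_sub, tanh_pi_mul_I_div_two_sub,
    neg_div_neg_eq, inv_div_inv]

theorem BDS_eq_tanhRatio_mul (b : ℝ) (θ : ℂ) :
    BDS b θ = tanhRatio (2 * π * I / 3) θ * tanhRatio (-(2 * π * I / (3 * b * (b + 1 / b)))) θ *
      tanhRatio (-(2 * π * I * b / (3 * (b + 1 / b)))) θ := by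
  rw [BDS, tanhRatio, tanhRatio, tanhRatio, mul_div_mul_comm, mul_div_mul_comm]
  ring_nf

theorem BD_crossing_general (b : ℝ) (θ : ℂ) :
    BDS b θ = BDS b (Real.pi * I - θ) := by
  simp only [BDS_eq_tanhRatio_mul, tanhRatio_pi_mul_I_sub]

/-- Crossing symmetry of the Bullough-Dodd S-matrix: `S(θ) = S(iπ - θ)`
wherever both sides are defined. -/
theorem BD_crossing (b : ℝ) (hb : b ≠ 0) (θ : ℂ)
    (h : ∀ θ' ∈ ({θ, Real.pi * I - θ} : Set ℂ),
         ∀ c ∈ ({2 * Real.pi * I / 3,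
                  2 * Real.pi * I / (3 * (b : ℂ) * ((b : ℂ) + 1 / (b : ℂ))),
                  2 * Real.pi * I * (b : ℂ) / (3 * ((b : ℂ) + 1 / (b : ℂ)))} : Set ℂ),
        Complex.cosh ((θ' + c) / 2) ≠ 0 ∧ Complex.cosh ((θ' - c) / 2) ≠ 0 ∧
        Complex.tanh ((θ' + c) / 2) ≠ 0 ∧ Complex.tanh ((θ' - c) / 2) ≠ 0) :
    BDS b θ = BDS b (Real.pi * I - θ) :=
  BD_crossing_general b θ
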